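/- Let R be a reverse homogeneous equidepth step bisimulation between stable configuration structures C and D. If R(X, Y), then for every n ∈ ℕ, R(X_{≤n}, Y_{≤n}), where X_{≤n} is the set of events of X of depth at most n. -/

import Mathlib

universe u v

/-- A configuration structure over event type `E` and label alphabet `L`:
a family of finite sets of events (configurations) with a labelling. -/
structure CS (E : Type u) (L : Type v) where
  C : Set (Set E)
  finite : ∀ X ∈ C, X.Finite
  label : E → L

namespace CS

variable {E E₁ E₂ : Type u} {L : Type v}

/-- Stability: rooted, connected, closed under bounded unions and intersections. -/
def IsStable (𝒞 : CS E L) : Prop :=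
  ∅ ∈ 𝒞.C ∧
  (∀ X ∈ 𝒞.C, X ≠ ∅ → ∃ e ∈ X, X \ {e} ∈ 𝒞.C) ∧
  (∀ X ∈ 𝒞.C, ∀ Y ∈ 𝒞.C, ∀ Z ∈ 𝒞.C, X ∪ Y ⊆ Z → X ∪ Y ∈ 𝒞.C) ∧
  (∀ X ∈ 𝒞.C, ∀ Y ∈ 𝒞.C, ∀ Z ∈ 𝒞.C, X ∪ Y ⊆ Z → X ∩ Y ∈ 𝒞.C)

/-- Causality: `d ≤_X e` iff every sub-configuration of `X` containing `e` contains `d`. -/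
def le (𝒞 : CS E L) (X : Set E) (d e : E) : Prop :=
  ∀ Y ∈ 𝒞.C, Y ⊆ X → e ∈ Y → d ∈ Y

/-- Strict causality `d <_X e`. -/
def lt (𝒞 : CS E L) (X : Set E) (d e : E) : Prop :=
  le 𝒞 X d e ∧ d ≠ e

/-- Concurrency within a configuration. -/
def co (𝒞 : CS E L) (X : Set E) (d e : E) : Prop :=
  ¬ lt 𝒞 X d e ∧ ¬ lt 𝒞 X e d

/-- The set of minimal events of a configuration. -/
def minE (𝒞 : CS E L) (X : Set E) : Set E :=
  {e | e ∈ X ∧ ∀ d ∈ X, ¬ lt 𝒞 X d e}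

/-- Depth of an event in a configuration: the length of the longest
causal chain (w.r.t. `<_X`) in `X` up to and including `e`. -/
noncomputable def depth (𝒞 : CS E L) (X : Set E) (e : E) : ℕ :=
  sSup {n | ∃ l : List E, l.length = n ∧ l.Chain' (lt 𝒞 X) ∧
    (∀ x ∈ l, x ∈ X) ∧ l.getLast? = some e}

/-- Multiset of labels of a (finite) set of events. -/
noncomputable def labelMS (𝒞 : CS E L) (S : Set E) : Multiset L := by
  classical exact if h : S.Finite then h.toFinset.val.map 𝒞.label else 0

/-- Single-event forward transition `X —a→ X'`. -/
def FTrans (𝒞 : CS E L) (a : L) (X X' : Set E) : Prop :=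
  X ∈ 𝒞.C ∧ X' ∈ 𝒞.C ∧ X ⊆ X' ∧ ∃ e, X' \ X = {e} ∧ 𝒞.label e = a

/-- Single-event reverse transition `X ⇝a X'`. -/
def RTrans (𝒞 : CS E L) (a : L) (X X' : Set E) : Prop :=
  FTrans 𝒞 a X' X

/-- Step transition `X —A→ X'`: the added events are pairwise concurrent
in `X'` and carry the label multiset `A`. -/
def Step (𝒞 : CS E L) (A : Multiset L) (X X' : Set E) : Prop :=
  X ∈ 𝒞.C ∧ X' ∈ 𝒞.C ∧ X ⊆ X' ∧ ∃ F : Finset E, ↑F = X' \ X ∧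
    (∀ d ∈ F, ∀ e ∈ F, co 𝒞 X' d e) ∧ F.val.map 𝒞.label = A

/-- Reverse step transition `X ⇝A X'`. -/
def RStep (𝒞 : CS E L) (A : Multiset L) (X X' : Set E) : Prop :=
  Step 𝒞 A X' X

/-- Equidepth step: all added events have the same depth in `X'`. -/
def EqStep (𝒞 : CS E L) (A : Multiset L) (X X' : Set E) : Prop :=
  Step 𝒞 A X X' ∧ ∀ d ∈ X' \ X, ∀ e ∈ X' \ X, depth 𝒞 X' d = depth 𝒞 X' e

/-- Reverse equidepth step `X ⇝A= X'`. -/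
def REqStep (𝒞 : CS E L) (A : Multiset L) (X X' : Set E) : Prop :=
  EqStep 𝒞 A X' X

/-- Single-event forward transition with depth: the new event has label `a`
and depth `k` in `X'`. -/
def FTransD (𝒞 : CS E L) (a : L) (k : ℕ) (X X' : Set E) : Prop :=
  X ∈ 𝒞.C ∧ X' ∈ 𝒞.C ∧ X ⊆ X' ∧
    ∃ e, X' \ X = {e} ∧ 𝒞.label e = a ∧ depth 𝒞 X' e = k

/-- Single-event reverse transition with depth. -/
def RTransD (𝒞 : CS E L) (a : L) (k : ℕ) (X X' : Set E) : Prop :=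
  FTransD 𝒞 a k X' X

/-- A multiset of labels is homogeneous if all its elements are equal. -/
def Hom (A : Multiset L) : Prop := ∀ a ∈ A, ∀ b ∈ A, a = b

/-- `R` is a relation between configurations of `𝒞` and `𝒟`, containing `(∅, ∅)`. -/
def Dom (𝒞 : CS E₁ L) (𝒟 : CS E₂ L) (R : Set E₁ → Set E₂ → Prop) : Prop :=
  R ∅ ∅ ∧ ∀ X Y, R X Y → X ∈ 𝒞.C ∧ Y ∈ 𝒟.C

/-- Interleaving bisimulation. -/
def IsIB (𝒞 : CS E₁ L) (𝒟 : CS E₂ L) (R : Set E₁ → Set E₂ → Prop) : Prop :=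
  Dom 𝒞 𝒟 R ∧ ∀ X Y, R X Y →
    (∀ a X', FTrans 𝒞 a X X' → ∃ Y', FTrans 𝒟 a Y Y' ∧ R X' Y') ∧
    (∀ a Y', FTrans 𝒟 a Y Y' → ∃ X', FTrans 𝒞 a X X' ∧ R X' Y')

/-- Reverse bisimulation: an IB also matching reverse single-event transitions. -/
def IsRB (𝒞 : CS E₁ L) (𝒟 : CS E₂ L) (R : Set E₁ → Set E₂ → Prop) : Prop :=
  IsIB 𝒞 𝒟 R ∧ ∀ X Y, R X Y →
    (∀ a X', RTrans 𝒞 a X X' → ∃ Y', RTrans 𝒟 a Y Y' ∧ R X' Y') ∧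
    (∀ a Y', RTrans 𝒟 a Y Y' → ∃ X', RTrans 𝒞 a X X' ∧ R X' Y')

/-- Step bisimulation. -/
def IsSB (𝒞 : CS E₁ L) (𝒟 : CS E₂ L) (R : Set E₁ → Set E₂ → Prop) : Prop :=
  Dom 𝒞 𝒟 R ∧ ∀ X Y, R X Y →
    (∀ A X', Step 𝒞 A X X' → ∃ Y', Step 𝒟 A Y Y' ∧ R X' Y') ∧
    (∀ A Y', Step 𝒟 A Y Y' → ∃ X', Step 𝒞 A X X' ∧ R X' Y')

/-- Reverse step bisimulation: an SB also matching reverse steps. -/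
def IsRSB (𝒞 : CS E₁ L) (𝒟 : CS E₂ L) (R : Set E₁ → Set E₂ → Prop) : Prop :=
  IsSB 𝒞 𝒟 R ∧ ∀ X Y, R X Y →
    (∀ A X', RStep 𝒞 A X X' → ∃ Y', RStep 𝒟 A Y Y' ∧ R X' Y') ∧
    (∀ A Y', RStep 𝒟 A Y Y' → ∃ X', RStep 𝒞 A X X' ∧ R X' Y')

/-- Reverse homogeneous step bisimulation: matches forward single-event
transitions and reverse homogeneous steps. -/
def IsRHSB (𝒞 : CS E₁ L) (𝒟 : CS E₂ L) (R : Set E₁ → Set E₂ → Prop) : Prop :=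
  Dom 𝒞 𝒟 R ∧ ∀ X Y, R X Y →
    (∀ a X', FTrans 𝒞 a X X' → ∃ Y', FTrans 𝒟 a Y Y' ∧ R X' Y') ∧
    (∀ a Y', FTrans 𝒟 a Y Y' → ∃ X', FTrans 𝒞 a X X' ∧ R X' Y') ∧
    (∀ A X', Hom A → RStep 𝒞 A X X' → ∃ Y', RStep 𝒟 A Y Y' ∧ R X' Y') ∧
    (∀ A Y', Hom A → RStep 𝒟 A Y Y' → ∃ X', RStep 𝒞 A X X' ∧ R X' Y')

/-- Reverse homogeneous equidepth step bisimulation. -/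
def IsRHESB (𝒞 : CS E₁ L) (𝒟 : CS E₂ L) (R : Set E₁ → Set E₂ → Prop) : Prop :=
  Dom 𝒞 𝒟 R ∧ ∀ X Y, R X Y →
    (∀ a X', FTrans 𝒞 a X X' → ∃ Y', FTrans 𝒟 a Y Y' ∧ R X' Y') ∧
    (∀ a Y', FTrans 𝒟 a Y Y' → ∃ X', FTrans 𝒞 a X X' ∧ R X' Y') ∧
    (∀ A X', Hom A → REqStep 𝒞 A X X' → ∃ Y', REqStep 𝒟 A Y Y' ∧ R X' Y') ∧
    (∀ A Y', Hom A → REqStep 𝒟 A Y Y' → ∃ X', REqStep 𝒞 A X X' ∧ R X' Y')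

/-- Depth-respecting bisimulation. -/
def IsDB (𝒞 : CS E₁ L) (𝒟 : CS E₂ L) (R : Set E₁ → Set E₂ → Prop) : Prop :=
  Dom 𝒞 𝒟 R ∧ ∀ X Y, R X Y →
    (∀ a k X', FTransD 𝒞 a k X X' → ∃ Y', FTransD 𝒟 a k Y Y' ∧ R X' Y') ∧
    (∀ a k Y', FTransD 𝒟 a k Y Y' → ∃ X', FTransD 𝒞 a k X X' ∧ R X' Y')

/-- Reverse depth-respecting bisimulation. -/
def IsRDB (𝒞 : CS E₁ L) (𝒟 : CS E₂ L) (R : Set E₁ → Set E₂ → Prop) : Prop :=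
  IsDB 𝒞 𝒟 R ∧ ∀ X Y, R X Y →
    (∀ a k X', RTransD 𝒞 a k X X' → ∃ Y', RTransD 𝒟 a k Y Y' ∧ R X' Y') ∧
    (∀ a k Y', RTransD 𝒟 a k Y Y' → ∃ X', RTransD 𝒞 a k X X' ∧ R X' Y')

/-- The lifting of a configuration structure w.r.t. a configuration `M`. -/
def lift (𝒞 : CS E L) (M : Set E) : CS E L where
  C := {Z | ∃ X, X ∈ 𝒞.C ∧ M ⊆ X ∧ minE 𝒞 X = minE 𝒞 M ∧ Z = X \ M}
  finite := by
    rintro Z ⟨X, hX, -, -, rfl⟩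
    exact (𝒞.finite X hX).subset Set.diff_subset
  label := 𝒞.label

/-- Events of `X` of depth at most `n`. -/
def levelLe (𝒞 : CS E L) (X : Set E) (n : ℕ) : Set E :=
  {e | e ∈ X ∧ depth 𝒞 X e ≤ n}

/-- Events of `X` of depth exactly `n`. -/
def levelEq (𝒞 : CS E L) (X : Set E) (n : ℕ) : Set E :=
  {e | e ∈ X ∧ depth 𝒞 X e = n}

/-- No equidepth auto-concurrency: distinct concurrent events never share
both label and depth. -/
def NoEqAC (𝒞 : CS E L) : Prop :=
  ∀ X ∈ 𝒞.C, ∀ d ∈ X, ∀ e ∈ X, co 𝒞 X d e → 𝒞.label d = 𝒞.label e →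
    depth 𝒞 X d = depth 𝒞 X e → d = e

/-- `f` (a set of pairs) is a label- and order-preserving isomorphism
between configurations `X` and `Y`. -/
def IsIso (𝒞 : CS E₁ L) (𝒟 : CS E₂ L) (X : Set E₁) (Y : Set E₂)
    (f : Set (E₁ × E₂)) : Prop :=
  (∀ p ∈ f, p.1 ∈ X ∧ p.2 ∈ Y) ∧
  (∀ d ∈ X, ∃! e, (d, e) ∈ f) ∧
  (∀ e ∈ Y, ∃! d, (d, e) ∈ f) ∧
  (∀ p ∈ f, 𝒞.label p.1 = 𝒟.label p.2) ∧
  (∀ p ∈ f, ∀ q ∈ f, (lt 𝒞 X p.1 q.1 ↔ lt 𝒟 Y p.2 q.2))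

/-- Hereditary history-preserving bisimulation. -/
def IsHH (𝒞 : CS E₁ L) (𝒟 : CS E₂ L)
    (R : Set (Set E₁ × Set E₂ × Set (E₁ × E₂))) : Prop :=
  (∅, ∅, ∅) ∈ R ∧
  ∀ X Y f, (X, Y, f) ∈ R →
    X ∈ 𝒞.C ∧ Y ∈ 𝒟.C ∧ IsIso 𝒞 𝒟 X Y f ∧
    (∀ a X', FTrans 𝒞 a X X' → ∃ Y' f', FTrans 𝒟 a Y Y' ∧
      (X', Y', f') ∈ R ∧ {p ∈ f' | p.1 ∈ X} = f) ∧
    (∀ a Y', FTrans 𝒟 a Y Y' → ∃ X' f', FTrans 𝒞 a X X' ∧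
      (X', Y', f') ∈ R ∧ {p ∈ f' | p.1 ∈ X} = f) ∧
    (∀ a X', RTrans 𝒞 a X X' → ∃ Y' f', RTrans 𝒟 a Y Y' ∧
      (X', Y', f') ∈ R ∧ {p ∈ f | p.1 ∈ X'} = f')

end CS

open CS

/-!
Removing a maximal event of `X` is a reverse equidepth step, so `R X Y` lets it be matched by the
removal of an event `u` of `Y` with the same label. By induction on `|X| + |Y|`, related
configurations have the same multiset of depths: were the two removed depths `a < b`, comparing
with the removals of all other maximal events shows that every maximal event of `X` has depth `a`,
that `u` is the only event of `Y` deeper than `a`, and that `X` has a second event of depth `a`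
with the label of `u`. Removing both at once is matched by two events of one depth in `Y`, which
the depth multisets forbid. Consequently an event of `X` of maximal depth `> n` is matched by one
of the same depth, and removing both leaves `X_{≤n}` and `Y_{≤n}` unchanged.
-/

theorem add_eq_add_of_add_eq_add {M : Type*} [AddCancelCommMonoid M] {a a' b b' k k' : M}
    (ha : a + k = a' + k') (hb : b + k = b' + k') : a + b' = a' + b := by
  refine add_right_cancel (b := k + k') ?_
  calc a + b' + (k + k') = a + k + (b' + k') := add_add_add_comm ..
    _ = a' + k' + (b + k) := by rw [ha, ← hb]
    _ = a' + b + (k + k') := by rw [add_add_add_comm, add_comm k']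

theorem Multiset.eq_and_eq_of_singleton_add_eq {α : Type*} {a b c d : α}
    (h : {a} + {b} = ({c} + {d} : Multiset α)) (had : a ≠ d) : a = c ∧ b = d := by
  rw [Multiset.singleton_add, Multiset.singleton_add, Multiset.cons_eq_cons] at h
  rcases h with ⟨hac, hbd⟩ | ⟨-, cs, -, hd⟩
  · exact ⟨hac, Multiset.singleton_inj.1 hbd⟩
  · exact absurd (Multiset.mem_singleton.1 (hd ▸ Multiset.mem_cons_self a cs)) had

namespace CS

open Set

variable {E : Type u} {L : Type v} {𝒞 : CS E L} {X Z : Set E} {d e f : E}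

def maxE (𝒞 : CS E L) (X : Set E) : Set E :=
  {e | e ∈ X ∧ ∀ d ∈ X, ¬ lt 𝒞 X e d}

theorem le.trans (h₁ : le 𝒞 X d e) (h₂ : le 𝒞 X e f) : le 𝒞 X d f :=
  fun Y hY hYX hf => h₁ Y hY hYX (h₂ Y hY hYX hf)

theorem le.mem (hX : X ∈ 𝒞.C) (he : e ∈ X) (h : le 𝒞 X d e) : d ∈ X :=
  h X hX subset_rfl he

theorem le_subconfig_iff (h𝒞 : IsStable 𝒞) (hX : X ∈ 𝒞.C) (hZ : Z ∈ 𝒞.C) (hZX : Z ⊆ X)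
    (he : e ∈ Z) : le 𝒞 Z d e ↔ le 𝒞 X d e := by
  refine ⟨fun h Y hY hYX heY => ?_, fun h Y hY hYZ => h Y hY (hYZ.trans hZX)⟩
  exact (h (Y ∩ Z) (h𝒞.2.2.2 Y hY Z hZ X hX (union_subset hYX hZX)) inter_subset_right
    ⟨heY, he⟩).1

theorem lt_subconfig_iff (h𝒞 : IsStable 𝒞) (hX : X ∈ 𝒞.C) (hZ : Z ∈ 𝒞.C) (hZX : Z ⊆ X)
    (he : e ∈ Z) : lt 𝒞 Z d e ↔ lt 𝒞 X d e :=
  and_congr_left' (le_subconfig_iff h𝒞 hX hZ hZX he)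

theorem le_antisymm (h𝒞 : IsStable 𝒞) (hX : X ∈ 𝒞.C) (he : e ∈ X)
    (h₁ : le 𝒞 X d e) (h₂ : le 𝒞 X e d) : d = e := by
  -- In a smallest sub-configuration `Y ∋ e` of `X`, connectedness gives `Y \ {r} ∈ 𝒞` for some
  -- `r`, and minimality forces `r = e`; but `d ∈ Y \ {e}` would drag `e` along.
  obtain ⟨Y, ⟨hY, hYX, heY⟩, hmin⟩ := exists_min_image {Y | Y ∈ 𝒞.C ∧ Y ⊆ X ∧ e ∈ Y} ncard
    ((𝒞.finite X hX).finite_subsets.subset fun Y hY => hY.2.1) ⟨X, hX, subset_rfl, he⟩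
  obtain ⟨r, hr, hYr⟩ := h𝒞.2.1 Y hY (nonempty_iff_ne_empty.mp ⟨e, heY⟩)
  have hYr' : Y \ {r} ⊆ X := sdiff_subset.trans hYX
  have hnot : e ∉ Y \ {r} := fun h => (hmin _ ⟨hYr, hYr', h⟩).not_gt
    (ncard_sdiff_singleton_lt_of_mem hr (𝒞.finite Y hY))
  by_contra hde
  refine hnot (h₂ _ hYr hYr' ⟨h₁ Y hY hYX heY, fun hdr => hnot ⟨heY, ?_⟩⟩)
  rintro rfl
  exact hde hdr

theorem lt.trans (h𝒞 : IsStable 𝒞) (hX : X ∈ 𝒞.C) (he : e ∈ X)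
    (h₁ : lt 𝒞 X d e) (h₂ : lt 𝒞 X e f) : lt 𝒞 X d f := by
  refine ⟨h₁.1.trans h₂.1, ?_⟩
  rintro rfl
  exact h₁.2 (le_antisymm h𝒞 hX he h₁.1 h₂.1)

theorem length_le_ncard_of_chain (h𝒞 : IsStable 𝒞) (hX : X ∈ 𝒞.C) {l : List E}
    (hl : l.IsChain (lt 𝒞 X)) (hlX : ∀ x ∈ l, x ∈ X) : l.length ≤ X.ncard := by
  classical
  -- `lt 𝒞 X` is transitive only through events of `X`, hence the restricted relation `r`.
  let r : E → E → Prop := fun a b => lt 𝒞 X a b ∧ b ∈ X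
  have : Trans r r r :=
    ⟨fun {_ _ _} (h₁ : r _ _) (h₂ : r _ _) => ⟨h₁.1.trans h𝒞 hX h₁.2 h₂.1, h₂.2⟩⟩
  have hnodup : l.Nodup :=
    ((hl.imp_of_mem_imp (S := r) fun _ b _ hb h => ⟨h, hlX b hb⟩).pairwise).imp fun h => h.1.2
  rw [← List.toFinset_card_of_nodup hnodup, ncard_eq_toFinset_card X (𝒞.finite X hX)]
  exact Finset.card_le_card fun x hx => by simpa using hlX x (List.mem_toFinset.mp hx)

/-- The set whose supremum defines `depth`. -/
def chainLengths (𝒞 : CS E L) (X : Set E) (e : E) : Set ℕ :=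
  {n | ∃ l : List E, l.length = n ∧ l.IsChain (lt 𝒞 X) ∧ (∀ x ∈ l, x ∈ X) ∧ l.getLast? = some e}

theorem bddAbove_chainLengths (h𝒞 : IsStable 𝒞) (hX : X ∈ 𝒞.C) :
    BddAbove (chainLengths 𝒞 X e) :=
  ⟨X.ncard, by rintro _ ⟨l, rfl, hl, hlX, -⟩; exact length_le_ncard_of_chain h𝒞 hX hl hlX⟩

theorem length_le_depth (h𝒞 : IsStable 𝒞) (hX : X ∈ 𝒞.C) {l : List E}
    (hl : l.IsChain (lt 𝒞 X)) (hlX : ∀ x ∈ l, x ∈ X) (hlast : l.getLast? = some e) :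
    l.length ≤ depth 𝒞 X e :=
  le_csSup (bddAbove_chainLengths h𝒞 hX) ⟨l, rfl, hl, hlX, hlast⟩

theorem one_le_depth (h𝒞 : IsStable 𝒞) (hX : X ∈ 𝒞.C) (he : e ∈ X) : 1 ≤ depth 𝒞 X e :=
  length_le_depth h𝒞 hX (List.isChain_singleton e) (by simpa using he) rfl

theorem exists_chain_length_eq_depth (h𝒞 : IsStable 𝒞) (hX : X ∈ 𝒞.C) (he : e ∈ X) :
    ∃ l : List E, l.length = depth 𝒞 X e ∧ l.IsChain (lt 𝒞 X) ∧ (∀ x ∈ l, x ∈ X) ∧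
      l.getLast? = some e :=
  Nat.sSup_mem (s := chainLengths 𝒞 X e)
    ⟨1, [e], rfl, List.isChain_singleton e, by simpa using he, rfl⟩ (bddAbove_chainLengths h𝒞 hX)

theorem depth_lt_depth (h𝒞 : IsStable 𝒞) (hX : X ∈ 𝒞.C) (he : e ∈ X) (h : lt 𝒞 X d e) :
    depth 𝒞 X d < depth 𝒞 X e := by
  obtain ⟨l, hlen, hl, hlX, hlast⟩ := exists_chain_length_eq_depth h𝒞 hX (h.1.mem hX he)
  have hchain : (l ++ [e]).IsChain (lt 𝒞 X) :=
    hl.append (List.isChain_singleton e) (by simpa [hlast] using h)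
  have := length_le_depth h𝒞 hX hchain (by simpa [or_imp, forall_and] using ⟨hlX, he⟩)
    (List.getLast?_concat ..)
  simp only [List.length_append, List.length_singleton] at this
  omega

theorem mem_maxE_of_forall_depth_le (h𝒞 : IsStable 𝒞) (hX : X ∈ 𝒞.C) (he : e ∈ X)
    (hmax : ∀ z ∈ X, depth 𝒞 X z ≤ depth 𝒞 X e) : e ∈ maxE 𝒞 X :=
  ⟨he, fun z hz h => (depth_lt_depth h𝒞 hX hz h).not_ge (hmax z hz)⟩

theorem depth_subconfig (h𝒞 : IsStable 𝒞) (hX : X ∈ 𝒞.C) (hZ : Z ∈ 𝒞.C) (hZX : Z ⊆ X)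
    (he : e ∈ Z) : depth 𝒞 Z e = depth 𝒞 X e := by
  suffices chainLengths 𝒞 Z e = chainLengths 𝒞 X e from congrArg sSup this
  have hlt : ∀ l : List E, (∀ x ∈ l, x ∈ Z) → (l.IsChain (lt 𝒞 Z) ↔ l.IsChain (lt 𝒞 X)) :=
    fun l hlZ => List.IsChain.iff_of_mem_imp fun _ b _ hb =>
      lt_subconfig_iff h𝒞 hX hZ hZX (hlZ b hb)
  ext n
  constructor
  · rintro ⟨l, hlen, hl, hlZ, hlast⟩
    exact ⟨l, hlen, (hlt l hlZ).1 hl, fun x hx => hZX (hlZ x hx), hlast⟩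
  · rintro ⟨l, hlen, hl, -, hlast⟩
    -- a chain of `X` ending in `Z` lies in `Z`, since `Z` is left-closed in `X`
    have hlZ : ∀ x ∈ l, x ∈ Z := hl.backwards_induction (· ∈ Z) l
      (fun _ _ h hy => h.1 Z hZ hZX hy) (fun _ => List.getLast_of_mem_getLast? hlast ▸ he)
    exact ⟨l, hlen, (hlt l hlZ).2 hl, hlZ, hlast⟩

theorem exists_depth_add_one_eq (h𝒞 : IsStable 𝒞) (hX : X ∈ 𝒞.C) (he : e ∈ X)
    (h2 : 2 ≤ depth 𝒞 X e) : ∃ d ∈ X, depth 𝒞 X d + 1 = depth 𝒞 X e := by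
  obtain ⟨l, hlen, hl, hlX, hlast⟩ := exists_chain_length_eq_depth h𝒞 hX he
  have hne : l.dropLast ≠ [] := by
    rw [← List.length_pos_iff, List.length_dropLast]; omega
  have hde : lt 𝒞 X (l.dropLast.getLast hne) e :=
    List.getLast_of_mem_getLast? hlast ▸ hl.rel_getLast_dropLast hne
  have hlen' := length_le_depth h𝒞 hX hl.dropLast
    (fun x hx => hlX x (List.dropLast_subset l hx)) (List.getLast?_eq_some_getLast hne)
  have := depth_lt_depth h𝒞 hX he hde
  rw [List.length_dropLast] at hlen'
  exact ⟨_, hde.1.mem hX he, by omega⟩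

theorem mem_maxE_subconfig (h𝒞 : IsStable 𝒞) (hX : X ∈ 𝒞.C) (hZ : Z ∈ 𝒞.C) (hZX : Z ⊆ X)
    (he : e ∈ maxE 𝒞 X) (heZ : e ∈ Z) : e ∈ maxE 𝒞 Z :=
  ⟨heZ, fun z hz h => he.2 z (hZX hz) ((lt_subconfig_iff h𝒞 hX hZ hZX hz).1 h)⟩

theorem sdiff_singleton_mem (h𝒞 : IsStable 𝒞) (hX : X ∈ 𝒞.C) (he : e ∈ maxE 𝒞 X) :
    X \ {e} ∈ 𝒞.C := by
  induction hn : X.ncard using Nat.strong_induction_on generalizing X with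
  | _ n ih =>
  obtain ⟨r, hr, hXr⟩ := h𝒞.2.1 X hX (nonempty_iff_ne_empty.mp ⟨e, he.1⟩)
  by_cases hre : r = e
  · rwa [← hre]
  -- Otherwise `X \ {e}` is `(X \ {r}) \ {e}`, known by induction, together with `r`, which
  -- some sub-configuration avoiding `e` contains because `e` is maximal.
  have hXre : (X \ {r}) \ {e} ∈ 𝒞.C :=
    ih _ (hn ▸ ncard_sdiff_singleton_lt_of_mem hr (𝒞.finite X hX)) hXr
      (mem_maxE_subconfig h𝒞 hX hXr sdiff_subset he ⟨he.1, Ne.symm hre⟩) rfl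
  obtain ⟨Y, hY, hYX, hrY, heY⟩ : ∃ Y ∈ 𝒞.C, Y ⊆ X ∧ r ∈ Y ∧ e ∉ Y := by
    have : ¬ le 𝒞 X e r := fun h => he.2 r hr ⟨h, Ne.symm hre⟩
    simpa [le] using this
  have hunion : X \ {e} = (X \ {r}) \ {e} ∪ Y := by
    ext x
    simp only [mem_union, mem_sdiff, mem_singleton_iff]
    constructor
    · rintro ⟨hx, hxe⟩
      by_cases hxr : x = r
      · exact Or.inr (hxr ▸ hrY)
      · exact Or.inl ⟨⟨hx, hxr⟩, hxe⟩
    · rintro (⟨⟨hx, -⟩, hxe⟩ | hxY)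
      exacts [⟨hx, hxe⟩, ⟨hYX hxY, fun h => heY (h ▸ hxY)⟩]
  rw [hunion]
  exact h𝒞.2.2.1 _ hXre Y hY X hX (union_subset (sdiff_subset.trans sdiff_subset) hYX)

theorem sdiff_finset_mem (h𝒞 : IsStable 𝒞) (hX : X ∈ 𝒞.C) {S : Finset E}
    (hS : ∀ x ∈ S, x ∈ maxE 𝒞 X) : X \ ↑S ∈ 𝒞.C := by
  classical
  induction S using Finset.induction_on with
  | empty => simpa using hX
  | insert a S ha ih =>
    have hXS := ih fun x hx => hS x (Finset.mem_insert_of_mem hx)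
    have haX := hS a (Finset.mem_insert_self a S)
    rw [Finset.coe_insert, insert_eq, union_comm, ← sdiff_sdiff]
    exact sdiff_singleton_mem h𝒞 hXS
      (mem_maxE_subconfig h𝒞 hX hXS sdiff_subset haX ⟨haX.1, by simpa using ha⟩)

theorem reqStep_sdiff (h𝒞 : IsStable 𝒞) (hX : X ∈ 𝒞.C) {S : Finset E}
    (hS : ∀ x ∈ S, x ∈ maxE 𝒞 X) (hdepth : ∀ x ∈ S, ∀ y ∈ S, depth 𝒞 X x = depth 𝒞 X y) :
    REqStep 𝒞 (S.val.map 𝒞.label) X (X \ ↑S) := by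
  have hdiff : X \ (X \ ↑S) = ↑S := sdiff_sdiff_cancel_left fun x hx => (hS x hx).1
  refine ⟨⟨sdiff_finset_mem h𝒞 hX hS, hX, sdiff_subset, S, hdiff.symm,
    fun x hx y hy => ⟨(hS x hx).2 y (hS y hy).1, (hS y hy).2 x (hS x hx).1⟩, rfl⟩, ?_⟩
  rw [hdiff]
  exact hdepth

theorem REqStep.exists_mem_sdiff {A : Multiset L} {X' : Set E} (h : REqStep 𝒞 A X X')
    (hA : A ≠ 0) : ∃ x ∈ X, x ∉ X' := by
  obtain ⟨⟨-, -, -, F, hF, -, rfl⟩, -⟩ := h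
  obtain ⟨x, hx⟩ : F.Nonempty := by simpa [Finset.nonempty_iff_ne_empty] using hA
  have hx' : x ∈ X \ X' := hF ▸ Finset.mem_coe.2 hx
  exact ⟨x, hx'.1, hx'.2⟩

theorem REqStep.eq_sdiff_singleton {a : L} {X' : Set E} (h : REqStep 𝒞 {a} X X') :
    ∃ x ∈ X, 𝒞.label x = a ∧ X' = X \ {x} := by
  obtain ⟨⟨-, -, hsub, F, hF, -, hFa⟩, -⟩ := h
  obtain ⟨x, rfl⟩ := Finset.card_eq_one.mp (by simpa using congrArg Multiset.card hFa)
  have hx : X \ X' = {x} := by simpa using hF.symm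
  refine ⟨x, (hx.symm ▸ mem_singleton x : x ∈ X \ X').1, by simpa using hFa, ?_⟩
  rw [← hx, sdiff_sdiff_cancel_left hsub]

open Classical in
/-- The multiset of depths of the events of `X` (junk value `0` on infinite sets). -/
noncomputable def depthProfile (𝒞 : CS E L) (X : Set E) : Multiset ℕ :=
  if h : X.Finite then h.toFinset.val.map (depth 𝒞 X) else 0

theorem depthProfile_of_finite (h : X.Finite) :
    depthProfile 𝒞 X = h.toFinset.val.map (depth 𝒞 X) :=
  dif_pos h

theorem mem_depthProfile_subconfig (h𝒞 : IsStable 𝒞) (hX : X ∈ 𝒞.C) (hZ : Z ∈ 𝒞.C)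
    (hZX : Z ⊆ X) {k : ℕ} : k ∈ depthProfile 𝒞 Z ↔ ∃ z ∈ Z, depth 𝒞 X z = k := by
  rw [depthProfile_of_finite (𝒞.finite Z hZ)]
  simp only [Multiset.mem_map, Finset.mem_val, Finite.mem_toFinset]
  exact exists_congr fun z => and_congr_right fun hz => by
    rw [depth_subconfig h𝒞 hX hZ hZX hz]

theorem mem_depthProfile (hX : X ∈ 𝒞.C) {k : ℕ} :
    k ∈ depthProfile 𝒞 X ↔ ∃ x ∈ X, depth 𝒞 X x = k := by
  rw [depthProfile_of_finite (𝒞.finite X hX)]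
  simp

theorem depthProfile_empty : depthProfile 𝒞 ∅ = 0 := by
  simp [depthProfile_of_finite finite_empty]

theorem depthProfile_eq_add (h𝒞 : IsStable 𝒞) (hX : X ∈ 𝒞.C) (hZ : Z ∈ 𝒞.C) (hZX : Z ⊆ X)
    {F : Finset E} (hF : ↑F = X \ Z) :
    depthProfile 𝒞 X = F.val.map (depth 𝒞 X) + depthProfile 𝒞 Z := by
  have hXfin := 𝒞.finite X hX
  have hZfin := 𝒞.finite Z hZ
  have hdisj : Disjoint F hZfin.toFinset := by
    rw [← Finset.disjoint_coe, hF, Finite.coe_toFinset]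
    exact disjoint_sdiff_left
  have hsplit : hXfin.toFinset = F.disjUnion hZfin.toFinset hdisj := by
    ext x
    rw [Finset.mem_disjUnion, Finite.mem_toFinset, Finite.mem_toFinset, ← Finset.mem_coe, hF]
    by_cases hx : x ∈ Z
    · simp [hx, hZX hx]
    · simp [hx]
  rw [depthProfile_of_finite hXfin, depthProfile_of_finite hZfin, hsplit,
    Finset.disjUnion_val, Multiset.map_add]
  congr 1
  exact Multiset.map_congr rfl fun z hz => (depth_subconfig h𝒞 hX hZ hZX (by simpa using hz)).symm

theorem depthProfile_eq_cons (h𝒞 : IsStable 𝒞) (hX : X ∈ 𝒞.C) (hXe : X \ {e} ∈ 𝒞.C)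
    (he : e ∈ X) : depthProfile 𝒞 X = depth 𝒞 X e ::ₘ depthProfile 𝒞 (X \ {e}) := by
  classical
  rw [depthProfile_eq_add h𝒞 hX hXe sdiff_subset (F := {e}) (by
    rw [Finset.coe_singleton, sdiff_sdiff_cancel_left (singleton_subset_iff.2 he)])]
  simp

theorem depthProfile_eq_replicate_add (h𝒞 : IsStable 𝒞) {A : Multiset L} {X' : Set E}
    (h : REqStep 𝒞 A X X') {x : E} (hx : x ∈ X) (hx' : x ∉ X') :
    depthProfile 𝒞 X = Multiset.replicate (Multiset.card A) (depth 𝒞 X x) + depthProfile 𝒞 X' := by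
  obtain ⟨⟨hX', hX, hsub, F, hF, -, rfl⟩, hdepth⟩ := h
  rw [depthProfile_eq_add h𝒞 hX hX' hsub hF, Multiset.card_map, ← Multiset.card_map (depth 𝒞 X),
    ← Multiset.eq_replicate_card.2]
  intro k hk
  obtain ⟨y, hy, rfl⟩ := Multiset.mem_map.1 hk
  exact hdepth y (hF ▸ hy) x ⟨hx, hx'⟩

theorem levelLe_eq_self {n : ℕ} (h : ∀ x ∈ X, depth 𝒞 X x ≤ n) : levelLe 𝒞 X n = X :=
  Subset.antisymm (fun _ hx => hx.1) fun x hx => ⟨hx, h x hx⟩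

theorem levelLe_sdiff_singleton (h𝒞 : IsStable 𝒞) (hX : X ∈ 𝒞.C) (hXe : X \ {e} ∈ 𝒞.C)
    {n : ℕ} (hn : n < depth 𝒞 X e) : levelLe 𝒞 (X \ {e}) n = levelLe 𝒞 X n := by
  ext x
  constructor
  · rintro ⟨⟨hx, hxe⟩, hxn⟩
    exact ⟨hx, by rwa [depth_subconfig h𝒞 hX hXe sdiff_subset ⟨hx, hxe⟩] at hxn⟩
  · rintro ⟨hx, hxn⟩
    have hxe : x ≠ e := by rintro rfl; omega
    exact ⟨⟨hx, hxe⟩, by rwa [depth_subconfig h𝒞 hX hXe sdiff_subset ⟨hx, hxe⟩]⟩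

section Bisimulation

variable {E₁ E₂ : Type u} {𝒞 : CS E₁ L} {𝒟 : CS E₂ L} {R : Set E₁ → Set E₂ → Prop}
  {X : Set E₁} {Y : Set E₂}

theorem Dom.ssubset_induction (hR : Dom 𝒞 𝒟 R) {P : Set E₁ → Set E₂ → Prop}
    (step : ∀ X Y, R X Y → (∀ X' ⊂ X, ∀ Y' ⊂ Y, R X' Y' → P X' Y') → P X Y)
    (hXY : R X Y) : P X Y := by
  induction hn : X.ncard + Y.ncard using Nat.strong_induction_on generalizing X Y with
  | _ n ih =>
  obtain ⟨hX, hY⟩ := hR.2 X Y hXY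
  refine step X Y hXY fun X' hX' Y' hY' h => ih _ ?_ h rfl
  have := ncard_lt_ncard hX' (𝒞.finite X hX)
  have := ncard_lt_ncard hY' (𝒟.finite Y hY)
  omega

theorem IsRHESB.symm (hR : IsRHESB 𝒞 𝒟 R) : IsRHESB 𝒟 𝒞 (fun Y X => R X Y) := by
  obtain ⟨⟨hR₀, hdom⟩, hmatch⟩ := hR
  refine ⟨⟨hR₀, fun Y X h => (hdom X Y h).symm⟩, fun Y X h => ?_⟩
  obtain ⟨h₁, h₂, h₃, h₄⟩ := hmatch X Y h
  exact ⟨h₂, h₁, h₄, h₃⟩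

theorem IsRHESB.exists_rel_sdiff (hR : IsRHESB 𝒞 𝒟 R) (h𝒞 : IsStable 𝒞) (hXY : R X Y)
    {S : Finset E₁} (hS : ∀ x ∈ S, x ∈ maxE 𝒞 X)
    (hdepth : ∀ x ∈ S, ∀ y ∈ S, depth 𝒞 X x = depth 𝒞 X y)
    (hlabel : ∀ x ∈ S, ∀ y ∈ S, 𝒞.label x = 𝒞.label y) :
    ∃ Y', REqStep 𝒟 (S.val.map 𝒞.label) Y Y' ∧ R (X \ ↑S) Y' := by
  have hhom : Hom (S.val.map 𝒞.label) := by
    simp only [Hom, Multiset.mem_map, Finset.mem_val]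
    rintro _ ⟨x, hx, rfl⟩ _ ⟨y, hy, rfl⟩
    exact hlabel x hx y hy
  exact (hR.2 X Y hXY).2.2.1 _ _ hhom (reqStep_sdiff h𝒞 (hR.1.2 X Y hXY).1 hS hdepth)

theorem IsRHESB.exists_rel_sdiff_singleton (hR : IsRHESB 𝒞 𝒟 R) (h𝒞 : IsStable 𝒞)
    (hXY : R X Y) {e : E₁} (he : e ∈ maxE 𝒞 X) :
    ∃ u ∈ Y, 𝒟.label u = 𝒞.label e ∧ R (X \ {e}) (Y \ {u}) := by
  obtain ⟨Y', hstep, hR'⟩ := hR.exists_rel_sdiff h𝒞 hXY (S := {e}) (by simpa using he)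
    (by simp) (by simp)
  obtain ⟨u, hu, hlabel, rfl⟩ := REqStep.eq_sdiff_singleton (by simpa using hstep)
  exact ⟨u, hu, hlabel, by simpa using hR'⟩

theorem depthProfile_eq_singleton_add_of_rel (hR : IsRHESB 𝒞 𝒟 R) (h𝒞 : IsStable 𝒞)
    (h𝒟 : IsStable 𝒟) (hXY : R X Y)
    (ih : ∀ X' ⊂ X, ∀ Y' ⊂ Y, R X' Y' → depthProfile 𝒞 X' = depthProfile 𝒟 Y')
    {x : E₁} {y : E₂} (hx : x ∈ X) (hy : y ∈ Y) (hxy : R (X \ {x}) (Y \ {y})) :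
    depthProfile 𝒞 X = {depth 𝒞 X x} + depthProfile 𝒞 (X \ {x}) ∧
      depthProfile 𝒟 Y = {depth 𝒟 Y y} + depthProfile 𝒞 (X \ {x}) := by
  obtain ⟨hX, hY⟩ := hR.1.2 X Y hXY
  obtain ⟨hXx, hYy⟩ := hR.1.2 _ _ hxy
  rw [Multiset.singleton_add, Multiset.singleton_add]
  refine ⟨depthProfile_eq_cons h𝒞 hX hXx hx, ?_⟩
  rw [ih _ (sdiff_singleton_ssubset.2 hx) _ (sdiff_singleton_ssubset.2 hy) hxy]
  exact depthProfile_eq_cons h𝒟 hY hYy hy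

theorem depth_eq_of_mem_maxE_of_depthProfile (hR : IsRHESB 𝒞 𝒟 R) (h𝒞 : IsStable 𝒞)
    (h𝒟 : IsStable 𝒟) (hXY : R X Y)
    (ih : ∀ X' ⊂ X, ∀ Y' ⊂ Y, R X' Y' → depthProfile 𝒞 X' = depthProfile 𝒟 Y')
    {K : Multiset ℕ} {a b : ℕ} (hDX : depthProfile 𝒞 X = {a} + K)
    (hDY : depthProfile 𝒟 Y = {b} + K) (hab : a ≠ b) {w : E₁} (hw : w ∈ maxE 𝒞 X) :
    depth 𝒞 X w = a ∧ ∃ v ∈ Y, 𝒟.label v = 𝒞.label w ∧ depth 𝒟 Y v = b := by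
  obtain ⟨v, hv, hvw, hwv⟩ := hR.exists_rel_sdiff_singleton h𝒞 hXY hw
  obtain ⟨hDX', hDY'⟩ := depthProfile_eq_singleton_add_of_rel hR h𝒞 h𝒟 hXY ih hw.1 hv hwv
  -- cancelling the profiles left after both matched removals: `{a, depth v} = {depth w, b}`
  obtain ⟨h₁, h₂⟩ := Multiset.eq_and_eq_of_singleton_add_eq
    (add_eq_add_of_add_eq_add (hDX.symm.trans hDX') (hDY.symm.trans hDY')) hab
  exact ⟨h₁.symm, v, hv, hvw, h₂⟩

theorem eq_of_depthProfile_of_pair (hR : IsRHESB 𝒞 𝒟 R) (h𝒞 : IsStable 𝒞)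
    (h𝒟 : IsStable 𝒟) (hXY : R X Y)
    (ih : ∀ X' ⊂ X, ∀ Y' ⊂ Y, R X' Y' → depthProfile 𝒞 X' = depthProfile 𝒟 Y')
    {K : Multiset ℕ} {a b : ℕ} (hDX : depthProfile 𝒞 X = {a} + K)
    (hDY : depthProfile 𝒟 Y = {b} + K) {x e : E₁} (hx : x ∈ maxE 𝒞 X) (he : e ∈ maxE 𝒞 X)
    (hxe : x ≠ e) (hxa : depth 𝒞 X x = a) (hea : depth 𝒞 X e = a)
    (hxl : 𝒞.label x = 𝒞.label e) : a = b := by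
  classical
  obtain ⟨hX, hY⟩ := hR.1.2 X Y hXY
  set S : Finset E₁ := {x, e}
  have hS : ∀ y ∈ S, y ∈ maxE 𝒞 X := by simp [S, hx, he]
  have hSd : ∀ y ∈ S, ∀ z ∈ S, depth 𝒞 X y = depth 𝒞 X z := by simp [S, hxa, hea]
  have hSl : ∀ y ∈ S, ∀ z ∈ S, 𝒞.label y = 𝒞.label z := by simp [S, hxl]
  obtain ⟨Y', hstep, hR'⟩ := hR.exists_rel_sdiff h𝒞 hXY hS hSd hSl
  have hcard : Multiset.card (S.val.map 𝒞.label) = 2 := by simp [S, hxe]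
  obtain ⟨y, hy, hy'⟩ := hstep.exists_mem_sdiff (Multiset.card_pos.1 (by omega))
  have hDX₂ := depthProfile_eq_replicate_add h𝒞 (reqStep_sdiff h𝒞 hX hS hSd) he.1 (by simp [S])
  have hDY₂ := depthProfile_eq_replicate_add h𝒟 hstep hy hy'
  have hXS : X \ ↑S ⊂ X := (ssubset_iff_of_subset sdiff_subset).2 ⟨e, he.1, by simp [S]⟩
  have hY' : Y' ⊂ Y := (ssubset_iff_of_subset hstep.1.2.2.1).2 ⟨y, hy, hy'⟩
  rw [hcard, hea, ih _ hXS _ hY' hR'] at hDX₂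
  rw [hcard] at hDY₂
  -- `{a} + {d, d} = {a, a} + {b}` for the common depth `d` of the two events removed from `Y`;
  -- counting `b` gives `2 * [d = b] = 1`
  have hcount := congrArg (Multiset.count b)
    (add_eq_add_of_add_eq_add (hDX.symm.trans hDX₂) (hDY.symm.trans hDY₂))
  by_contra hab
  simp only [Multiset.count_add, Multiset.count_replicate, Multiset.count_singleton,
    if_neg (Ne.symm hab), if_neg hab] at hcount
  split_ifs at hcount <;> omega

theorem not_depth_lt_of_rel_sdiff_singleton (hR : IsRHESB 𝒞 𝒟 R) (h𝒞 : IsStable 𝒞)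
    (h𝒟 : IsStable 𝒟) (hXY : R X Y)
    (ih : ∀ X' ⊂ X, ∀ Y' ⊂ Y, R X' Y' → depthProfile 𝒞 X' = depthProfile 𝒟 Y')
    {e : E₁} {u : E₂} (he : e ∈ X) (hu : u ∈ Y) (hlabel : 𝒟.label u = 𝒞.label e)
    (heu : R (X \ {e}) (Y \ {u})) : ¬ depth 𝒞 X e < depth 𝒟 Y u := by
  intro hlt
  obtain ⟨hX, hY⟩ := hR.1.2 X Y hXY
  obtain ⟨hXe, hYu⟩ := hR.1.2 _ _ heu
  obtain ⟨hDX, hDY⟩ := depthProfile_eq_singleton_add_of_rel hR h𝒞 h𝒟 hXY ih he hu heu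
  have hK := ih _ (sdiff_singleton_ssubset.2 he) _ (sdiff_singleton_ssubset.2 hu) heu
  have hmatch := fun {w : E₁} (hw : w ∈ maxE 𝒞 X) =>
    depth_eq_of_mem_maxE_of_depthProfile hR h𝒞 h𝒟 hXY ih hDX hDY hlt.ne hw
  have hXe_le : ∀ x ∈ X, depth 𝒞 X x ≤ depth 𝒞 X e := by
    obtain ⟨x₀, hx₀, hmax⟩ := exists_max_image X (depth 𝒞 X) (𝒞.finite X hX) ⟨e, he⟩
    exact fun x hx => (hmax x hx).trans
      (hmatch (mem_maxE_of_forall_depth_le h𝒞 hX hx₀ hmax)).1.le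
  have hdeep : ∀ y ∈ Y, depth 𝒞 X e < depth 𝒟 Y y → y = u := by
    intro y hy hey
    by_contra hyu
    obtain ⟨x, hx, hxy⟩ := (mem_depthProfile_subconfig h𝒞 hX hXe sdiff_subset).1
      (hK ▸ (mem_depthProfile_subconfig h𝒟 hY hYu sdiff_subset).2 ⟨y, ⟨hy, hyu⟩, rfl⟩)
    exact (hXe_le x hx.1).not_gt (hxy ▸ hey)
  -- a predecessor of `u` has the depth of `e`, which therefore occurs twice in `X`
  obtain ⟨p, hp, hpu⟩ := exists_depth_add_one_eq h𝒟 hY hu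
    (by have := one_le_depth h𝒞 hX he; omega)
  have hpu' : p ≠ u := by rintro rfl; omega
  have hpe : depth 𝒟 Y p = depth 𝒞 X e := by
    have := mt (hdeep p hp) hpu'
    omega
  obtain ⟨x, ⟨hx, hxe : x ≠ e⟩, hxd⟩ := (mem_depthProfile_subconfig h𝒞 hX hXe sdiff_subset).1
    (hK ▸ (mem_depthProfile_subconfig h𝒟 hY hYu sdiff_subset).2 ⟨p, ⟨hp, hpu'⟩, hpe⟩)
  have hxmax : x ∈ maxE 𝒞 X := mem_maxE_of_forall_depth_le h𝒞 hX hx (hxd ▸ hXe_le)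
  have hxl : 𝒞.label x = 𝒞.label e := by
    obtain ⟨-, v, hv, hvx, hvu⟩ := hmatch hxmax
    rw [← hvx, hdeep v hv (hvu ▸ hlt), hlabel]
  exact hlt.ne (eq_of_depthProfile_of_pair hR h𝒞 h𝒟 hXY ih hDX hDY hxmax
    (mem_maxE_of_forall_depth_le h𝒞 hX he hXe_le) hxe hxd rfl hxl)

theorem depth_eq_of_rel_sdiff_singleton (hR : IsRHESB 𝒞 𝒟 R) (h𝒞 : IsStable 𝒞)
    (h𝒟 : IsStable 𝒟) (hXY : R X Y)
    (ih : ∀ X' ⊂ X, ∀ Y' ⊂ Y, R X' Y' → depthProfile 𝒞 X' = depthProfile 𝒟 Y')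
    {e : E₁} {u : E₂} (he : e ∈ X) (hu : u ∈ Y) (hlabel : 𝒟.label u = 𝒞.label e)
    (heu : R (X \ {e}) (Y \ {u})) : depth 𝒟 Y u = depth 𝒞 X e :=
  (not_lt.1 (not_depth_lt_of_rel_sdiff_singleton hR h𝒞 h𝒟 hXY ih he hu hlabel heu)).antisymm
    (not_lt.1 (not_depth_lt_of_rel_sdiff_singleton hR.symm h𝒟 h𝒞 hXY
      (fun Y' hY' X' hX' h => (ih X' hX' Y' hY' h).symm) hu he hlabel.symm heu))

theorem IsRHESB.depthProfile_eq (hR : IsRHESB 𝒞 𝒟 R) (h𝒞 : IsStable 𝒞) (h𝒟 : IsStable 𝒟)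
    (hXY : R X Y) : depthProfile 𝒞 X = depthProfile 𝒟 Y := by
  refine hR.1.ssubset_induction (P := fun X Y => depthProfile 𝒞 X = depthProfile 𝒟 Y)
    (fun X Y hXY ih => ?_) hXY
  obtain ⟨hX, hY⟩ := hR.1.2 X Y hXY
  rcases X.eq_empty_or_nonempty with rfl | hXne
  · rcases Y.eq_empty_or_nonempty with rfl | hYne
    · rw [depthProfile_empty, depthProfile_empty]
    obtain ⟨v, hv, hmax⟩ := exists_max_image Y (depth 𝒟 Y) (𝒟.finite Y hY) hYne
    obtain ⟨w, hw, -⟩ := hR.symm.exists_rel_sdiff_singleton h𝒟 hXY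
      (mem_maxE_of_forall_depth_le h𝒟 hY hv hmax)
    exact absurd hw (notMem_empty w)
  obtain ⟨e, he, hmax⟩ := exists_max_image X (depth 𝒞 X) (𝒞.finite X hX) hXne
  obtain ⟨u, hu, hlabel, heu⟩ := hR.exists_rel_sdiff_singleton h𝒞 hXY
    (mem_maxE_of_forall_depth_le h𝒞 hX he hmax)
  obtain ⟨hDX, hDY⟩ := depthProfile_eq_singleton_add_of_rel hR h𝒞 h𝒟 hXY ih he hu heu
  rw [hDX, hDY, depth_eq_of_rel_sdiff_singleton hR h𝒞 h𝒟 hXY ih he hu hlabel heu]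

theorem IsRHESB.rel_levelLe_of_forall_ssubset (hR : IsRHESB 𝒞 𝒟 R) (h𝒞 : IsStable 𝒞)
    (h𝒟 : IsStable 𝒟) (hXY : R X Y) (n : ℕ)
    (ih : ∀ X' ⊂ X, ∀ Y' ⊂ Y, R X' Y' → R (levelLe 𝒞 X' n) (levelLe 𝒟 Y' n)) :
    R (levelLe 𝒞 X n) (levelLe 𝒟 Y n) := by
  obtain ⟨hX, hY⟩ := hR.1.2 X Y hXY
  by_cases hXn : ∀ x ∈ X, depth 𝒞 X x ≤ n
  · have hYn : ∀ y ∈ Y, depth 𝒟 Y y ≤ n := by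
      intro y hy
      obtain ⟨x, hx, hxy⟩ := (mem_depthProfile hX).1
        (hR.depthProfile_eq h𝒞 h𝒟 hXY ▸ (mem_depthProfile hY).2 ⟨y, hy, rfl⟩)
      exact hxy ▸ hXn x hx
    rwa [levelLe_eq_self hXn, levelLe_eq_self hYn]
  obtain ⟨x, hx, hxn⟩ := not_forall₂.1 hXn
  obtain ⟨e, he, hmax⟩ := exists_max_image X (depth 𝒞 X) (𝒞.finite X hX) ⟨x, hx⟩
  obtain ⟨u, hu, hlabel, heu⟩ := hR.exists_rel_sdiff_singleton h𝒞 hXY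
    (mem_maxE_of_forall_depth_le h𝒞 hX he hmax)
  obtain ⟨hXe, hYu⟩ := hR.1.2 _ _ heu
  have hen : n < depth 𝒞 X e := (not_le.1 hxn).trans_le (hmax x hx)
  have hun : n < depth 𝒟 Y u := by
    rwa [depth_eq_of_rel_sdiff_singleton hR h𝒞 h𝒟 hXY
      (fun _ _ _ _ h => hR.depthProfile_eq h𝒞 h𝒟 h) he hu hlabel heu]
  rw [← levelLe_sdiff_singleton h𝒞 hX hXe hen, ← levelLe_sdiff_singleton h𝒟 hY hYu hun]
  exact ih _ (sdiff_singleton_ssubset.2 he) _ (sdiff_singleton_ssubset.2 hu) heu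

end Bisimulation

end CS

/-- an RHESB relates the depth-at-most-`n` truncations of related
configurations. -/
theorem stmt13 {E₁ E₂ : Type u} {L : Type v} (𝒞 : CS E₁ L) (𝒟 : CS E₂ L)
    (h𝒞 : IsStable 𝒞) (h𝒟 : IsStable 𝒟)
    (R : Set E₁ → Set E₂ → Prop) (hR : IsRHESB 𝒞 𝒟 R)
    (X : Set E₁) (Y : Set E₂) (hXY : R X Y) :
    ∀ n : ℕ, R (levelLe 𝒞 X n) (levelLe 𝒟 Y n) := by
  intro n
  exact hR.1.ssubset_induction (P := fun X Y => R (levelLe 𝒞 X n) (levelLe 𝒟 Y n))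
    (fun X Y hXY ih => hR.rel_levelLe_of_forall_ssubset h𝒞 h𝒟 hXY n ih) hXY
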